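/- arXiv:2104.13705 — 3 statements merged into one kernel-verified Lean document; each statement's English description precedes it below -/
import Mathlib

section
/- For a nonnegative absolutely continuous random variable X with support [0,u] (u finite), cdf F, and mean E(X), the failure extropy satisfies E_f(X) ≤ -(1/(2u))[u - E(X)]². -/
open MeasureTheory

/-!
Since `X` takes values in `[0, u]`, the layer-cake formula gives `E X = ∫₀ᵘ (1 - F) = u - ∫₀ᵘ F`,
and Cauchy–Schwarz on `[0, u]` gives `(∫₀ᵘ F)² ≤ u ∫₀ᵘ F²`; combining the two is the bound.
-/

theorem sq_intervalIntegral_le_mul_intervalIntegral_sq {f : ℝ → ℝ} {a b : ℝ} (hab : a ≤ b)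
    (hf : IntervalIntegrable f volume a b)
    (hf2 : IntervalIntegrable (fun x => f x ^ 2) volume a b) :
    (∫ x in a..b, f x) ^ 2 ≤ (b - a) * ∫ x in a..b, f x ^ 2 := by
  set I := ∫ x in a..b, f x
  set J := ∫ x in a..b, f x ^ 2
  have hquad : ∀ t : ℝ, 0 ≤ (b - a) * (t * t) + (-2 * I) * t + J := by
    intro t
    have hexpand : ∫ x in a..b, (t - f x) ^ 2 = (b - a) * (t * t) + (-2 * I) * t + J := by
      have hpoint : (fun x => (t - f x) ^ 2) = fun x => t * t - 2 * t * f x + f x ^ 2 := by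
        funext x; ring
      rw [hpoint, intervalIntegral.integral_add (intervalIntegrable_const.sub (hf.const_mul _)) hf2,
        intervalIntegral.integral_sub intervalIntegrable_const (hf.const_mul _),
        intervalIntegral.integral_const, intervalIntegral.integral_const_mul, smul_eq_mul]
      ring
    exact hexpand ▸ intervalIntegral.integral_nonneg hab fun x _ => sq_nonneg (t - f x)
  -- A nonnegative quadratic in `t` has nonpositive discriminant `4 I² - 4 (b - a) J`.
  have := discrim_le_zero hquad
  rw [discrim] at this
  linarith

section

variable {Ω : Type*} [MeasurableSpace Ω] {μ : Measure Ω}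

theorem integral_eq_intervalIntegral_measureReal_lt {X : Ω → ℝ} {u : ℝ} (hu : 0 ≤ u)
    (hint : Integrable X μ) (hX_nonneg : 0 ≤ᵐ[μ] X) (hX_le : X ≤ᵐ[μ] fun _ => u) :
    ∫ ω, X ω ∂μ = ∫ t in (0:ℝ)..u, μ.real {ω | t < X ω} := by
  rw [hint.integral_eq_integral_Ioc_meas_le hX_nonneg hX_le, intervalIntegral.integral_of_le hu]
  refine integral_congr_ae ?_
  filter_upwards [meas_le_ae_eq_meas_lt μ (volume.restrict (Set.Ioc 0 u)) X] with t ht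
  exact congrArg ENNReal.toReal ht

theorem monotone_measureReal_le [IsFiniteMeasure μ] (X : Ω → ℝ) :
    Monotone fun t => μ.real {ω | X ω ≤ t} :=
  fun _ _ hst => measureReal_mono fun _ hω => le_trans hω hst

theorem integral_eq_sub_intervalIntegral_measureReal_le [IsProbabilityMeasure μ] {X : Ω → ℝ}
    (hX : Measurable X) {u : ℝ} (hsupp : ∀ ω, X ω ∈ Set.Icc 0 u) :
    ∫ ω, X ω ∂μ = u - ∫ t in (0:ℝ)..u, μ.real {ω | X ω ≤ t} := by
  obtain ⟨ω⟩ := nonempty_of_isProbabilityMeasure μ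
  have hu : 0 ≤ u := Set.nonempty_Icc.mp ⟨X ω, hsupp ω⟩
  have hint : Integrable X μ :=
    (integrable_const u).mono' hX.aestronglyMeasurable (ae_of_all _ fun ω => by
      rw [Real.norm_of_nonneg (hsupp ω).1]; exact (hsupp ω).2)
  have htail : ∀ t, μ.real {ω | t < X ω} = 1 - μ.real {ω | X ω ≤ t} := fun t => by
    have hcompl : {ω | t < X ω} = {ω | X ω ≤ t}ᶜ := by ext; simp
    rw [hcompl]
    exact probReal_compl_eq_one_sub (hX measurableSet_Iic)
  rw [integral_eq_intervalIntegral_measureReal_lt hu hint (ae_of_all _ fun ω => (hsupp ω).1)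
      (ae_of_all _ fun ω => (hsupp ω).2)]
  simp_rw [htail]
  rw [intervalIntegral.integral_sub intervalIntegrable_const
      ((monotone_measureReal_le X).monotoneOn _).intervalIntegrable]
  simp

end

theorem failure_extropy_upper_bound_general
    {Ω : Type*} [MeasurableSpace Ω] (μ : Measure Ω) [IsProbabilityMeasure μ]
    (X : Ω → ℝ) (hX : Measurable X) (u : ℝ)
    (hsupp : ∀ ω, X ω ∈ Set.Icc 0 u)
    (F : ℝ → ℝ) (hF : ∀ x, F x = (μ {ω | X ω ≤ x}).toReal) :
    -(1/2) * ∫ x in (0:ℝ)..u, (F x) ^ 2 ≤ -(1/(2*u)) * (u - ∫ ω, X ω ∂μ) ^ 2 := by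
  obtain rfl : F = fun t => μ.real {ω | X ω ≤ t} := funext hF
  obtain ⟨ω⟩ := nonempty_of_isProbabilityMeasure μ
  have hu : 0 ≤ u := Set.nonempty_Icc.mp ⟨X ω, hsupp ω⟩
  have hF_mono := monotone_measureReal_le (μ := μ) X
  have hF_sq_mono : Monotone fun t => μ.real {ω | X ω ≤ t} ^ 2 :=
    fun _ _ hst => pow_le_pow_left₀ measureReal_nonneg (hF_mono hst) 2
  have hCS := sq_intervalIntegral_le_mul_intervalIntegral_sq hu
    (hF_mono.monotoneOn _).intervalIntegrable (hF_sq_mono.monotoneOn _).intervalIntegrable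
  rw [sub_zero, mul_comm] at hCS
  have hJ : (∫ t in (0:ℝ)..u, μ.real {ω | X ω ≤ t}) ^ 2 / u
      ≤ ∫ t in (0:ℝ)..u, μ.real {ω | X ω ≤ t} ^ 2 :=
    div_le_of_le_mul₀ hu (intervalIntegral.integral_nonneg hu fun _ _ => sq_nonneg _) hCS
  rw [integral_eq_sub_intervalIntegral_measureReal_le hX hsupp, sub_sub_cancel]
  have hrw : ∀ I : ℝ, -(1 / (2 * u)) * I ^ 2 = -(1 / 2) * (I ^ 2 / u) := fun I => by ring
  rw [hrw]
  linarith

/-- For a nonnegative absolutely continuous random variable `X` with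
support `[0,u]` (`u` finite), cdf `F` and mean `E X`, the failure extropy
`E_f(X) = -(1/2)∫₀ᵘ F²` satisfies `E_f(X) ≤ -(1/(2u))(u - E X)²`. -/
theorem failure_extropy_upper_bound
    {Ω : Type*} [MeasurableSpace Ω] (μ : Measure Ω) [IsProbabilityMeasure μ]
    (X : Ω → ℝ) (hX : Measurable X) (u : ℝ) (hu : 0 < u)
    (hsupp : ∀ ω, X ω ∈ Set.Icc 0 u)
    (F : ℝ → ℝ) (hF : ∀ x, F x = (μ {ω | X ω ≤ x}).toReal) :
    -(1/2) * ∫ x in (0:ℝ)..u, (F x) ^ 2 ≤ -(1/(2*u)) * (u - ∫ ω, X ω ∂μ) ^ 2 :=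
  failure_extropy_upper_bound_general μ X hX u hsupp F hF
end

section
/- If Y = aX + b with a > 0 and b ≥ 0, and X is nonnegative absolutely continuous with bounded support, then E_f(Y) = a·E_f(X), i.e., the failure extropy scales by a and is independent of the shift b. -/
open MeasureTheory

theorem setOf_mul_add_le_mul_add {Ω : Type*} (X : Ω → ℝ) {a : ℝ} (ha : 0 < a) (b x : ℝ) :
    {ω | a * X ω + b ≤ a * x + b} = {ω | X ω ≤ x} := by
  ext ω
  simp only [Set.mem_ofPred_eq, add_le_add_iff_right, mul_le_mul_iff_right₀ ha]

theorem failure_extropy_affine_general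
    {Ω : Type*} [MeasurableSpace Ω] (μ : Measure Ω)
    (X : Ω → ℝ) (u : ℝ)
    (a b : ℝ) (ha : 0 < a)
    (F G : ℝ → ℝ)
    (hF : ∀ x, F x = (μ {ω | X ω ≤ x}).toReal)
    (hG : ∀ y, G y = (μ {ω | a * X ω + b ≤ y}).toReal) :
    -(1/2) * ∫ y in b..(a * u + b), (G y) ^ 2
      = a * (-(1/2) * ∫ x in (0:ℝ)..u, (F x) ^ 2) := by
  have hGF : ∀ x, G (a * x + b) = F x := fun x => by
    rw [hG, hF, setOf_mul_add_le_mul_add X ha]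
  have hsubst : ∫ y in b..(a * u + b), (G y) ^ 2 = a * ∫ x in (0:ℝ)..u, (F x) ^ 2 :=
    calc ∫ y in b..(a * u + b), (G y) ^ 2
        = ∫ y in (a * 0 + b)..(a * u + b), (G y) ^ 2 := by rw [mul_zero, zero_add]
      _ = a • ∫ x in (0:ℝ)..u, (G (a * x + b)) ^ 2 :=
          (intervalIntegral.smul_integral_comp_mul_add (fun y => G y ^ 2) a b).symm
      _ = a * ∫ x in (0:ℝ)..u, (F x) ^ 2 := by simp only [hGF, smul_eq_mul]
  rw [hsubst]
  ring

/-- If `Y = aX + b` with `a > 0`, `b ≥ 0`, and `X` is nonnegative with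
bounded support `[0,u]` and cdf `F`, then the failure extropy of `Y` (with cdf
`G y = F((y-b)/a)` on support `[b, a·u + b]`) equals `a` times that of `X`. -/
theorem failure_extropy_affine
    {Ω : Type*} [MeasurableSpace Ω] (μ : Measure Ω) [IsProbabilityMeasure μ]
    (X : Ω → ℝ) (hX : Measurable X) (u : ℝ) (hu : 0 < u)
    (hsupp : ∀ ω, X ω ∈ Set.Icc 0 u)
    (a b : ℝ) (ha : 0 < a) (hb : 0 ≤ b)
    (F G : ℝ → ℝ)
    (hF : ∀ x, F x = (μ {ω | X ω ≤ x}).toReal)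
    (hG : ∀ y, G y = (μ {ω | a * X ω + b ≤ y}).toReal) :
    -(1/2) * ∫ y in b..(a * u + b), (G y) ^ 2
      = a * (-(1/2) * ∫ x in (0:ℝ)..u, (F x) ^ 2) :=
  failure_extropy_affine_general μ X u a b ha F G hF hG
end

section
/- If X ≤_rh Y (reversed hazard rate order), then X ≤_dfe Y, i.e., E_f(X;t) ≤ E_f(Y;t) for all t > 0 with F(t), G(t) > 0. -/
open MeasureTheory

/-- If `X ≤_rh Y` (reversed hazard rate order, i.e. `G/F` is
increasing, expressed cross-multiplied as `G x · F t ≤ F x · G t` for `x ≤ t`), then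
`X ≤_dfe Y`: `E_f(X;t) ≤ E_f(Y;t)` for all `t > 0` with `F t, G t > 0`, where
`E_f(X;t) = -(1/2)∫₀ᵗ (F x / F t)² dx`. -/
theorem rh_order_implies_dfe_order
    (F G : ℝ → ℝ)
    (hF0 : ∀ x, 0 ≤ F x) (hG0 : ∀ x, 0 ≤ G x)
    (hFmono : Monotone F) (hGmono : Monotone G)
    (hrh : ∀ x t : ℝ, x ≤ t → G x * F t ≤ F x * G t) :
    ∀ t > (0:ℝ), 0 < F t → 0 < G t →
      -(1/2) * ∫ x in (0:ℝ)..t, (F x / F t) ^ 2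
        ≤ -(1/2) * ∫ x in (0:ℝ)..t, (G x / G t) ^ 2 := by
  intro t ht hFt hGt
  have hFm : Monotone fun x => (F x / F t) ^ 2 := by
    intro a b hab
    exact pow_le_pow_left₀ (div_nonneg (hF0 a) hFt.le)
      (div_le_div_of_nonneg_right (hFmono hab) hFt.le) 2
      |>.trans_eq rfl
  have hGm : Monotone fun x => (G x / G t) ^ 2 := by
    intro a b hab
    exact pow_le_pow_left₀ (div_nonneg (hG0 a) hGt.le)
      (div_le_div_of_nonneg_right (hGmono hab) hGt.le) 2
  have key : (∫ x in (0:ℝ)..t, (G x / G t) ^ 2) ≤ ∫ x in (0:ℝ)..t, (F x / F t) ^ 2 := by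
    apply intervalIntegral.integral_mono_on ht.le
      hGm.intervalIntegrable hFm.intervalIntegrable
    intro x hx
    have h := hrh x t hx.2
    have h1 : G x / G t ≤ F x / F t := by
      rw [div_le_div_iff₀ hGt hFt]; linarith [h]
    exact pow_le_pow_left₀ (div_nonneg (hG0 x) hGt.le) h1 2
  linarith
end
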